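/- There exists a universal constant C < ∞ such that for every 0 < ℓ ≤ 2·arsinh(1) and every 0 < δ < arsinh(1), the area of the δ-thin part of the collar C(ℓ) satisfies Area(C(ℓ, δ)) = ∫₀^{2π}∫_{−X_δ(ℓ)}^{X_δ(ℓ)} ρ_ℓ(s)² ds dθ = 2ℓ·tan(ℓ·X_δ(ℓ)/(2π)) ≤ 2ℓ·sinh(δ)/sinh(ℓ/2) ≤ C·δ. -/

import Mathlib

open Real Set MeasureTheory

/-- Conformal factor of the collar metric. -/
noncomputable def collarRho (ℓ s : ℝ) : ℝ :=
  ℓ / (2 * π * Real.cos (ℓ * s / (2 * π)))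

/-- Half-length of the `δ`-thin part of the collar. -/
noncomputable def collarXdelta (δ ℓ : ℝ) : ℝ :=
  if Real.sinh (ℓ / 2) ≤ Real.sinh δ then
    (2 * π / ℓ) * (π / 2 - Real.arcsin (Real.sinh (ℓ / 2) / Real.sinh δ))
  else 0

/-!
With `a = ℓ / (2π)` the conformal factor is `a / cos (a s)`, whose square has primitive
`a tan (a s)`; this gives the area formula. On the thin part `a X_δ(ℓ) = arccos t` with
`t = sinh (ℓ/2) / sinh δ`, so `tan (a X_δ(ℓ)) = √(1 - t²) / t ≤ 1 / t`. Finally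
`sinh (ℓ/2) ≥ ℓ/2`, and `sinh δ ≤ δ cosh δ ≤ √2 δ` for `δ ≤ arsinh 1`, give the bound `8 δ`.
-/

namespace Real

theorem sinh_le_mul_cosh {x : ℝ} (hx : 0 ≤ x) : sinh x ≤ x * cosh x := by
  rcases hx.eq_or_lt with rfl | hx
  · simp
  obtain ⟨c, hc, hslope⟩ := exists_hasDerivAt_eq_slope sinh cosh hx
    continuous_sinh.continuousOn (fun t _ => hasDerivAt_sinh t)
  rw [sinh_zero, sub_zero, sub_zero, eq_div_iff hx.ne'] at hslope
  have hcosh : cosh c ≤ cosh x := by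
    rw [cosh_le_cosh, abs_of_pos hc.1, abs_of_pos hx]
    exact hc.2.le
  rw [← hslope, mul_comm]
  exact mul_le_mul_of_nonneg_left hcosh hx.le

theorem sinh_le_two_mul {x : ℝ} (h0 : 0 ≤ x) (h1 : x ≤ arsinh 1) : sinh x ≤ 2 * x := by
  have hcosh : cosh x ≤ 2 := calc
    cosh x ≤ cosh (arsinh 1) := by
      rwa [cosh_le_cosh, abs_of_nonneg h0, abs_of_nonneg (arsinh_nonneg_iff.mpr zero_le_one)]
    _ = √2 := by rw [cosh_arsinh]; norm_num
    _ ≤ 2 := by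
      rw [sqrt_le_left (by norm_num)]; norm_num
  calc sinh x ≤ x * cosh x := sinh_le_mul_cosh h0
    _ ≤ x * 2 := mul_le_mul_of_nonneg_left hcosh h0
    _ = 2 * x := mul_comm _ _

theorem tan_arccos_le_inv {t : ℝ} (ht : 0 < t) : tan (arccos t) ≤ t⁻¹ := by
  rw [tan_arccos, div_eq_mul_inv]
  apply mul_le_of_le_one_left (inv_nonneg.mpr ht.le)
  rw [sqrt_le_one]
  nlinarith

end Real

theorem integral_sq_div_cos_mul (a x y : ℝ) (h : ∀ s ∈ uIcc x y, cos (a * s) ≠ 0) :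
    ∫ s in x..y, (a / cos (a * s)) ^ 2 = a * tan (a * y) - a * tan (a * x) := by
  have hderiv : ∀ s ∈ uIcc x y,
      HasDerivAt (fun s => a * tan (a * s)) ((a / cos (a * s)) ^ 2) s := by
    intro s hs
    have htan := (hasDerivAt_tan (h s hs)).comp s ((hasDerivAt_id s).const_mul a)
    exact (htan.const_mul a).congr_deriv (by ring)
  refine intervalIntegral.integral_eq_sub_of_hasDerivAt hderiv (ContinuousOn.intervalIntegrable ?_)
  exact (continuousOn_const.div (by fun_prop) h).pow 2

theorem collarRho_eq (ℓ s : ℝ) : collarRho ℓ s = ℓ / (2 * π) / cos (ℓ / (2 * π) * s) := by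
  rw [collarRho, div_div, mul_div_right_comm]

theorem integral_collarRho_sq {ℓ X : ℝ} (h : |ℓ * X / (2 * π)| < π / 2) :
    ∫ s in (-X)..X, collarRho ℓ s ^ 2 = ℓ / π * tan (ℓ * X / (2 * π)) := by
  have hcos : ∀ s ∈ uIcc (-X) X, cos (ℓ / (2 * π) * s) ≠ 0 := by
    intro s hs
    have hsX : |s| ≤ |X| := by
      rw [uIcc_comm, mem_uIcc] at hs
      rcases hs with hs | hs <;> rw [abs_le] <;> constructor <;>
        linarith [le_abs_self X, neg_abs_le X]
    refine (cos_pos_of_mem_Ioo (abs_lt.mp (lt_of_le_of_lt ?_ h))).ne'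
    rw [mul_div_right_comm, abs_mul, abs_mul]
    gcongr
  simp only [collarRho_eq]
  rw [integral_sq_div_cos_mul _ _ _ hcos, mul_neg, tan_neg, mul_div_right_comm ℓ X]
  field_simp
  ring

theorem collarXdelta_of_lt {δ ℓ : ℝ} (h : sinh δ < sinh (ℓ / 2)) : collarXdelta δ ℓ = 0 :=
  if_neg h.not_ge

theorem mul_collarXdelta_eq_arccos {δ ℓ : ℝ} (hℓ : ℓ ≠ 0) (h : sinh (ℓ / 2) ≤ sinh δ) :
    ℓ * collarXdelta δ ℓ / (2 * π) = arccos (sinh (ℓ / 2) / sinh δ) := by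
  rw [collarXdelta, if_pos h, arccos]
  field_simp

theorem mul_collarXdelta_mem_Ico {δ ℓ : ℝ} (hℓ : 0 < ℓ) :
    ℓ * collarXdelta δ ℓ / (2 * π) ∈ Ico 0 (π / 2) := by
  by_cases h : sinh (ℓ / 2) ≤ sinh δ
  · have hsinh : 0 < sinh (ℓ / 2) := sinh_pos_iff.mpr (by positivity)
    rw [mul_collarXdelta_eq_arccos hℓ.ne' h]
    exact ⟨arccos_nonneg _, arccos_lt_pi_div_two.mpr (div_pos hsinh (hsinh.trans_le h))⟩
  · rw [collarXdelta_of_lt (not_le.mp h)]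
    simp [pi_pos]

theorem tan_mul_collarXdelta_le {δ ℓ : ℝ} (hℓ : 0 < ℓ) (hδ : 0 ≤ δ) :
    tan (ℓ * collarXdelta δ ℓ / (2 * π)) ≤ sinh δ / sinh (ℓ / 2) := by
  have hsinh : 0 < sinh (ℓ / 2) := sinh_pos_iff.mpr (by positivity)
  by_cases h : sinh (ℓ / 2) ≤ sinh δ
  · rw [mul_collarXdelta_eq_arccos hℓ.ne' h]
    exact (tan_arccos_le_inv (div_pos hsinh (hsinh.trans_le h))).trans_eq (inv_div _ _)
  · rw [collarXdelta_of_lt (not_le.mp h), mul_zero, zero_div, tan_zero]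
    exact div_nonneg (sinh_nonneg_iff.mpr hδ) hsinh.le

theorem mul_sinh_div_sinh_half_le {δ ℓ : ℝ} (hℓ : 0 < ℓ) (hδ : 0 ≤ δ) (hδ' : δ ≤ arsinh 1) :
    2 * ℓ * sinh δ / sinh (ℓ / 2) ≤ 8 * δ := by
  have hsinh : ℓ / 2 < sinh (ℓ / 2) := self_lt_sinh_iff.mpr (by positivity)
  rw [div_le_iff₀ (by linarith)]
  nlinarith [sinh_le_two_mul hδ hδ']

/-- The area of the `δ`-thin part of the collar `C(ℓ)` equals `2ℓ tan(ℓ X_δ(ℓ)/(2π))` and is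
bounded by `2ℓ sinh δ / sinh(ℓ/2) ≤ C δ` for a universal constant `C`. -/
theorem area_thin_part :
    ∃ C : ℝ, 0 < C ∧
      ∀ ℓ δ : ℝ, 0 < ℓ → ℓ ≤ 2 * Real.arsinh 1 → 0 < δ → δ < Real.arsinh 1 →
        (∫ θ in (0:ℝ)..(2 * π), ∫ s in (-(collarXdelta δ ℓ))..(collarXdelta δ ℓ),
            (collarRho ℓ s) ^ 2)
          = 2 * ℓ * Real.tan (ℓ * collarXdelta δ ℓ / (2 * π)) ∧
        2 * ℓ * Real.tan (ℓ * collarXdelta δ ℓ / (2 * π))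
          ≤ 2 * ℓ * Real.sinh δ / Real.sinh (ℓ / 2) ∧
        2 * ℓ * Real.sinh δ / Real.sinh (ℓ / 2) ≤ C * δ := by
  refine ⟨8, by norm_num, fun ℓ δ hℓ _ hδ hδ' =>
    ⟨?_, ?_, mul_sinh_div_sinh_half_le hℓ hδ.le hδ'.le⟩⟩
  · obtain ⟨hangle₀, hangle₁⟩ := mul_collarXdelta_mem_Ico (δ := δ) hℓ
    rw [integral_collarRho_sq (by rwa [abs_of_nonneg hangle₀]), intervalIntegral.integral_const,
      smul_eq_mul]
    field_simp
    ring
  · exact (mul_le_mul_of_nonneg_left (tan_mul_collarXdelta_le hℓ hδ.le) (by positivity)).trans_eq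
      (mul_div_assoc _ _ _).symm
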